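/- arXiv:2104.07024 — 2 statements merged into one kernel-verified Lean document; each statement's English description precedes it below -/
import Mathlib

section
/- Let n be a natural number, let x₀ be a real number, and let u, v : ℝ → ℝ be n times differentiable in a neighborhood of x₀ with v nonvanishing in a neighborhood of x₀. Then the n-th derivative of x ↦ u(x)/v(x) at x₀ equals n! · Σ_{ℓ=0}^{n} [ ( u⁽ⁿ⁻ℓ⁾(x₀)/(n−ℓ)! ) · Σ_{y} ( ( (Σᵢ yᵢ)! / (y₁! ⋯ y_ℓ!) ) · (−1)^{Σᵢ yᵢ} / v(x₀)^{(Σᵢ yᵢ)+1} · Πᵢ₌₁^ℓ ( v⁽ⁱ⁾(x₀)/i! )^{yᵢ} ) ], where the inner sum runs over all tuples y = (y₁, …, y_ℓ) of nonnegative integers satisfying Σᵢ₌₁^ℓ i·yᵢ = ℓ. -/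
/-!
Write `T f` for the Taylor series `∑ₖ f⁽ᵏ⁾(x₀)/k! Xᵏ` at `x₀`. Leibniz's rule says
`T (f g) ≡ T f * T g mod X^(n+1)`; applied to `v * v⁻¹ = 1` it shows that `T v⁻¹` inverts `T v`
modulo `X^(n+1)`. On the other hand, writing `T v ≡ c + ψ` with `c = v x₀` and `X ∣ ψ`, the
truncated geometric series `c⁻¹ ∑ₖ (-ψ/c)ᵏ` also inverts it, and the multinomial theorem turns the
coefficient of `X^ℓ` of that series into the sum over partitions of `ℓ`. Leibniz's rule for
`u * v⁻¹` then gives the formula.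
-/

open Finset Filter Topology PowerSeries

section ReciprocalSeries

variable {K : Type*} [Field K]

/-- The coefficient of `X ^ ℓ` in `1 / (c + ∑_{i ≥ 1} b i X ^ i)`, as a sum over the partitions of
`ℓ`: `y i` is the multiplicity of the part `i + 1`. -/
def reciprocalCoeff (c : K) (b : ℕ → K) (ℓ : ℕ) : K :=
  ∑ y ∈ (Fintype.piFinset fun _ : Fin ℓ => range (ℓ + 1)).filter
      (fun y => ∑ i : Fin ℓ, ((i : ℕ) + 1) * y i = ℓ),
    (Nat.multinomial univ y : K) * (-1) ^ (∑ i, y i) / c ^ ((∑ i, y i) + 1) *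
      ∏ i : Fin ℓ, b ((i : ℕ) + 1) ^ y i

theorem dvd_sub_of_dvd_mul_sub_one {R : Type*} [CommRing R] {d p q r : R}
    (hq : d ∣ p * q - 1) (hr : d ∣ p * r - 1) : d ∣ q - r := by
  have h : q - r = r * (p * q - 1) - q * (p * r - 1) := by ring
  rw [h]
  exact (dvd_mul_of_dvd_right hq r).sub (dvd_mul_of_dvd_right hr q)

theorem PowerSeries.X_pow_dvd_sub_sum_range {R : Type*} [Ring R] (φ : R⟦X⟧) (N : ℕ) :
    X ^ N ∣ φ - ∑ i ∈ range N, C (coeff i φ) * X ^ i :=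
  X_pow_dvd_iff.2 fun d hd => by simp [hd]

theorem PowerSeries.coeff_eq_of_X_pow_dvd_sub {R : Type*} [Ring R] {φ ψ : R⟦X⟧} {N m : ℕ}
    (h : X ^ N ∣ φ - ψ) (hm : m < N) : coeff m φ = coeff m ψ :=
  sub_eq_zero.1 (by rw [← map_sub]; exact X_pow_dvd_iff.1 h m hm)

theorem PowerSeries.coeff_sum_C_mul_X_pow_pow {R ι : Type*} [CommSemiring R] [DecidableEq ι]
    (s : Finset ι) (a : ι → R) (e : ι → ℕ) (k m : ℕ) :
    coeff m ((∑ i ∈ s, C (a i) * X ^ e i) ^ k) =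
      ∑ y ∈ s.piAntidiag k,
        if m = ∑ i ∈ s, e i * y i then (Nat.multinomial s y : R) * ∏ i ∈ s, a i ^ y i else 0 := by
  rw [sum_pow_eq_sum_piAntidiag, map_sum]
  refine sum_congr rfl fun y _ => ?_
  have h : ∏ i ∈ s, (C (a i) * X ^ e i) ^ y i =
      C (∏ i ∈ s, a i ^ y i) * (X : R⟦X⟧) ^ ∑ i ∈ s, e i * y i := by
    simp only [mul_pow, prod_mul_distrib, ← map_pow, ← map_prod, ← pow_mul, prod_pow_eq_pow_sum]
  rw [h, ← map_natCast (C (R := R)), ← mul_assoc, ← map_mul, coeff_C_mul_X_pow]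

theorem PowerSeries.X_pow_dvd_mul_geom_sum_sub_one {c : K} (hc : c ≠ 0) {ψ : K⟦X⟧} (hψ : X ∣ ψ)
    (N : ℕ) : X ^ N ∣ (C c + ψ) * (C c⁻¹ * ∑ k ∈ range N, (-(C c⁻¹ * ψ)) ^ k) - 1 := by
  have hC : C c * C c⁻¹ = 1 := by rw [← map_mul, mul_inv_cancel₀ hc, map_one]
  have h : (C c + ψ) * (C c⁻¹ * ∑ k ∈ range N, (-(C c⁻¹ * ψ)) ^ k) - 1 =
      -(-(C c⁻¹ * ψ)) ^ N := by
    rw [← mul_assoc, show (C c + ψ) * C c⁻¹ = 1 - -(C c⁻¹ * ψ) by linear_combination hC,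
      mul_neg_geom_sum]
    ring
  rw [h, dvd_neg]
  exact pow_dvd_pow_of_dvd (dvd_neg.2 (dvd_mul_of_dvd_right hψ _)) N

theorem sum_le_of_sum_succ_mul_eq {ℓ m : ℕ} {y : Fin ℓ → ℕ}
    (h : ∑ i : Fin ℓ, ((i : ℕ) + 1) * y i = m) : ∑ i, y i ≤ m :=
  h ▸ sum_le_sum fun _ _ => Nat.le_mul_of_pos_left _ (Nat.succ_pos _)

theorem PowerSeries.coeff_C_inv_mul_geom_sum_eq_reciprocalCoeff (c : K) (b : ℕ → K) (ℓ : ℕ) :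
    coeff ℓ (C c⁻¹ * ∑ k ∈ range (ℓ + 1),
      (-(C c⁻¹ * ∑ i : Fin ℓ, C (b ((i : ℕ) + 1)) * X ^ ((i : ℕ) + 1))) ^ k) =
      reciprocalCoeff c b ℓ := by
  have hpow : ∀ (ψ : K⟦X⟧) (k : ℕ), (-(C c⁻¹ * ψ)) ^ k = C ((-c⁻¹) ^ k) * ψ ^ k := fun ψ k => by
    rw [← neg_mul, ← map_neg, mul_pow, ← map_pow]
  simp only [hpow]
  simp only [coeff_C_mul, map_sum, coeff_sum_C_mul_X_pow_pow, mul_sum]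
  -- group the tuples `y` according to `k = ∑ i, y i`
  rw [reciprocalCoeff, ← sum_fiberwise_of_maps_to (t := range (ℓ + 1))
    (g := fun y : Fin ℓ → ℕ => ∑ i, y i) fun y hy => mem_range.2 (Nat.lt_succ_of_le
      (sum_le_of_sum_succ_mul_eq (mem_filter.1 hy).2))]
  refine sum_congr rfl fun k _ => ?_
  simp only [mul_ite, mul_zero]
  rw [← sum_filter]
  refine sum_congr ?_ fun y hy => ?_
  · ext y
    simp only [mem_filter, mem_piAntidiag, Fintype.mem_piFinset, mem_range, mem_univ,
      implies_true, and_true]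
    constructor
    · rintro ⟨hk, hw⟩
      exact ⟨⟨fun i => Nat.lt_succ_of_le ((single_le_sum (fun _ _ => Nat.zero_le _)
        (mem_univ i)).trans (sum_le_of_sum_succ_mul_eq hw.symm)), hw.symm⟩, hk⟩
    · rintro ⟨⟨-, hw⟩, hk⟩
      exact ⟨hk, hw.symm⟩
  · rw [(mem_filter.1 hy).2]
    ring

theorem PowerSeries.coeff_eq_reciprocalCoeff {φ q : K⟦X⟧} (hφ : coeff 0 φ ≠ 0) {ℓ : ℕ}
    (h : X ^ (ℓ + 1) ∣ φ * q - 1) :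
    coeff ℓ q = reciprocalCoeff (coeff 0 φ) (fun i => coeff i φ) ℓ := by
  set ψ : K⟦X⟧ := ∑ i : Fin ℓ, C (coeff ((i : ℕ) + 1) φ) * X ^ ((i : ℕ) + 1)
  have hψ : X ∣ ψ := dvd_sum fun i _ => dvd_mul_of_dvd_right (dvd_pow_self X (Nat.succ_ne_zero i)) _
  have htrunc : X ^ (ℓ + 1) ∣ φ - (C (coeff 0 φ) + ψ) := by
    convert X_pow_dvd_sub_sum_range φ (ℓ + 1) using 2
    rw [sum_range_succ', ← Fin.sum_univ_eq_sum_range (fun i => C (coeff (i + 1) φ) * X ^ (i + 1)),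
      pow_zero, mul_one, add_comm]
  have hq : X ^ (ℓ + 1) ∣ (C (coeff 0 φ) + ψ) * q - 1 := by
    convert h.sub (dvd_mul_of_dvd_left htrunc q) using 1
    ring
  have hdiff := coeff_eq_of_X_pow_dvd_sub (dvd_sub_of_dvd_mul_sub_one hq
    (X_pow_dvd_mul_geom_sum_sub_one hφ hψ (ℓ + 1))) ℓ.lt_succ_self
  exact hdiff.trans (coeff_C_inv_mul_geom_sum_eq_reciprocalCoeff _ (fun i => coeff i φ) ℓ)

end ReciprocalSeries

section Leibniz

variable {𝕜 : Type*} [NontriviallyNormedField 𝕜] {f g v : 𝕜 → 𝕜} {x₀ : 𝕜} {n : ℕ}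

theorem eventually_iteratedDeriv_mul
    (hf : ∀ᶠ x in 𝓝 x₀, ∀ i < n, DifferentiableAt 𝕜 (iteratedDeriv i f) x)
    (hg : ∀ᶠ x in 𝓝 x₀, ∀ i < n, DifferentiableAt 𝕜 (iteratedDeriv i g) x) :
    ∀ᶠ x in 𝓝 x₀, iteratedDeriv n (fun y => f y * g y) x =
      ∑ j ∈ range (n + 1),
        (n.choose j : 𝕜) * (iteratedDeriv j f x * iteratedDeriv (n - j) g x) := by
  induction n with
  | zero => exact Eventually.of_forall fun x => by simp
  | succ n ih =>
    have hn := ih (hf.mono fun x h i hi => h i (by omega)) (hg.mono fun x h i hi => h i (by omega))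
    filter_upwards [hn.eventually_nhds, hf, hg] with x hx hfx hgx
    have hterm : ∀ j ∈ range (n + 1), HasDerivAt
        (fun y => (n.choose j : 𝕜) * (iteratedDeriv j f y * iteratedDeriv (n - j) g y))
        ((n.choose j : 𝕜) * (iteratedDeriv (j + 1) f x * iteratedDeriv (n - j) g x +
          iteratedDeriv j f x * iteratedDeriv (n + 1 - j) g x)) x := by
      intro j hjmem
      have hj : j < n + 1 := mem_range.1 hjmem
      rw [Nat.sub_add_comm (Nat.le_of_lt_succ hj), iteratedDeriv_succ, iteratedDeriv_succ]
      exact ((hfx j hj).hasDerivAt.mul (hgx (n - j) (by omega)).hasDerivAt).const_mul _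
    rw [iteratedDeriv_succ, EventuallyEq.deriv_eq hx, (HasDerivAt.fun_sum hterm).deriv,
      sum_choose_succ_mul (fun i j => iteratedDeriv i f x * iteratedDeriv j g x)]
    simp only [mul_add, sum_add_distrib]
    ring

theorem eventually_differentiableAt_iteratedDeriv_mul
    (hf : ∀ᶠ x in 𝓝 x₀, ∀ i < n, DifferentiableAt 𝕜 (iteratedDeriv i f) x)
    (hg : ∀ᶠ x in 𝓝 x₀, ∀ i < n, DifferentiableAt 𝕜 (iteratedDeriv i g) x) :
    ∀ᶠ x in 𝓝 x₀, ∀ i < n, DifferentiableAt 𝕜 (iteratedDeriv i (fun y => f y * g y)) x := by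
  refine (Set.finite_Iio n).eventually_all.2 fun i (hi : i < n) => ?_
  have hleib := eventually_iteratedDeriv_mul (n := i) (hf.mono fun x h j hj => h j (by omega))
    (hg.mono fun x h j hj => h j (by omega))
  filter_upwards [hleib.eventually_nhds, hf, hg] with x hx hfx hgx
  rw [EventuallyEq.differentiableAt_iff hx]
  exact DifferentiableAt.fun_sum fun j hj =>
    ((hfx j (by grind)).mul (hgx (i - j) (by omega))).const_mul _

theorem eventually_differentiableAt_iteratedDeriv_inv
    (hv : ∀ᶠ x in 𝓝 x₀, ∀ i < n, DifferentiableAt 𝕜 (iteratedDeriv i v) x)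
    (hv₀ : ∀ᶠ x in 𝓝 x₀, v x ≠ 0) :
    ∀ᶠ x in 𝓝 x₀, ∀ i < n, DifferentiableAt 𝕜 (iteratedDeriv i (fun y => (v y)⁻¹)) x := by
  induction n with
  | zero => exact Eventually.of_forall fun x i hi => absurd hi (Nat.not_lt_zero i)
  | succ n ih =>
    have hinv := ih (hv.mono fun x h i hi => h i (by omega))
    have hv' : ∀ᶠ x in 𝓝 x₀, ∀ i < n,
        DifferentiableAt 𝕜 (iteratedDeriv i (fun y => -deriv v y)) x := by
      refine hv.mono fun x h i hi => ?_
      have heq : iteratedDeriv i (fun y => -deriv v y) = fun y => -iteratedDeriv (i + 1) v y :=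
        funext fun y => by rw [iteratedDeriv_fun_neg, iteratedDeriv_succ']
      exact heq ▸ (h (i + 1) (by omega)).neg
    have hderiv : ∀ᶠ x in 𝓝 x₀, deriv (fun y => (v y)⁻¹) x = -deriv v x * ((v x)⁻¹ * (v x)⁻¹) := by
      filter_upwards [hv, hv₀] with x hx hx₀
      rw [deriv_fun_inv'' (by simpa using hx 0 n.succ_pos) hx₀]
      field_simp
    have hreg := eventually_differentiableAt_iteratedDeriv_mul hv'
      (eventually_differentiableAt_iteratedDeriv_mul hinv hinv)
    filter_upwards [hderiv.eventually_nhds, hreg, hv, hv₀] with x hx hregx hvx hvx₀ i hi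
    rcases i with _ | i
    · rw [iteratedDeriv_zero]
      exact DifferentiableAt.fun_inv (by simpa using hvx 0 n.succ_pos) hvx₀
    · rw [iteratedDeriv_succ', ((EventuallyEq.iteratedDeriv hx i).differentiableAt_iff)]
      exact hregx i (by omega)

end Leibniz

section TaylorSeries

variable {𝕜 : Type*} [NontriviallyNormedField 𝕜] {f g v : 𝕜 → 𝕜} {x₀ : 𝕜} {n : ℕ}

noncomputable def taylorSeries (f : 𝕜 → 𝕜) (x₀ : 𝕜) : 𝕜⟦X⟧ :=
  PowerSeries.mk fun k => iteratedDeriv k f x₀ / k.factorial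

theorem taylorSeries_eq_C_of_eventuallyEq {c : 𝕜} (h : f =ᶠ[𝓝 x₀] fun _ => c) :
    taylorSeries f x₀ = C c := by
  ext k
  rw [taylorSeries, coeff_mk, h.iteratedDeriv_eq, iteratedDeriv_const, coeff_C]
  split_ifs with hk <;> simp [hk]

variable [CharZero 𝕜]

theorem X_pow_dvd_taylorSeries_mul_sub
    (hf : ∀ᶠ x in 𝓝 x₀, ∀ i < n, DifferentiableAt 𝕜 (iteratedDeriv i f) x)
    (hg : ∀ᶠ x in 𝓝 x₀, ∀ i < n, DifferentiableAt 𝕜 (iteratedDeriv i g) x) :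
    X ^ (n + 1) ∣ taylorSeries (fun x => f x * g x) x₀ - taylorSeries f x₀ * taylorSeries g x₀ := by
  refine X_pow_dvd_iff.2 fun d hdn => ?_
  have hleib := (eventually_iteratedDeriv_mul (n := d) (hf.mono fun x h i hi => h i (by omega))
    (hg.mono fun x h i hi => h i (by omega))).self_of_nhds
  rw [map_sub, sub_eq_zero, coeff_mul, Nat.sum_antidiagonal_eq_sum_range_succ
    (fun i j => coeff i (taylorSeries f x₀) * coeff j (taylorSeries g x₀)), taylorSeries, coeff_mk,
    hleib, sum_div]
  refine sum_congr rfl fun j hj => ?_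
  simp only [taylorSeries, coeff_mk]
  have hfac : (d.factorial : 𝕜) ≠ 0 := Nat.cast_ne_zero.2 d.factorial_ne_zero
  rw [Nat.cast_choose 𝕜 (Nat.le_of_lt_succ (mem_range.1 hj))]
  field_simp

theorem iteratedDeriv_inv_div_factorial
    (hv : ∀ᶠ x in 𝓝 x₀, ∀ i < n, DifferentiableAt 𝕜 (iteratedDeriv i v) x)
    (hv₀ : ∀ᶠ x in 𝓝 x₀, v x ≠ 0) {ℓ : ℕ} (hℓ : ℓ ≤ n) :
    iteratedDeriv ℓ (fun x => (v x)⁻¹) x₀ / ℓ.factorial =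
      reciprocalCoeff (v x₀) (fun i => iteratedDeriv i v x₀ / i.factorial) ℓ := by
  have hone : taylorSeries (fun x => v x * (v x)⁻¹) x₀ = 1 :=
    (taylorSeries_eq_C_of_eventuallyEq (hv₀.mono fun x hx => mul_inv_cancel₀ hx)).trans (map_one C)
  have hrecip := X_pow_dvd_taylorSeries_mul_sub hv
    (eventually_differentiableAt_iteratedDeriv_inv hv hv₀)
  rw [hone, ← neg_sub, dvd_neg] at hrecip
  have hcoeff := coeff_eq_reciprocalCoeff (by simpa [taylorSeries] using hv₀.self_of_nhds)
    ((pow_dvd_pow X (Nat.succ_le_succ hℓ)).trans hrecip)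
  simpa [taylorSeries] using hcoeff

end TaylorSeries

theorem quotient_rule (n : ℕ) (x₀ : ℝ) (u v : ℝ → ℝ)
    (hu : ∀ i < n, ∀ᶠ x in nhds x₀, DifferentiableAt ℝ (iteratedDeriv i u) x)
    (hv : ∀ i < n, ∀ᶠ x in nhds x₀, DifferentiableAt ℝ (iteratedDeriv i v) x)
    (hvne : ∀ᶠ x in nhds x₀, v x ≠ 0) :
    iteratedDeriv n (fun x => u x / v x) x₀ =
      (n.factorial : ℝ) *
        ∑ ℓ ∈ Finset.range (n + 1),
          (iteratedDeriv (n - ℓ) u x₀ / ((n - ℓ).factorial : ℝ)) *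
            ∑ y ∈ (Fintype.piFinset fun _ : Fin ℓ => Finset.range (ℓ + 1)).filter
                (fun y => ∑ i : Fin ℓ, ((i : ℕ) + 1) * y i = ℓ),
              (Nat.multinomial Finset.univ y : ℝ) * (-1) ^ (∑ i, y i) /
                  (v x₀) ^ ((∑ i, y i) + 1) *
                ∏ i : Fin ℓ,
                  (iteratedDeriv ((i : ℕ) + 1) v x₀ / (((i : ℕ) + 1).factorial : ℝ)) ^ y i := by
  have hu' := (Set.finite_Iio n).eventually_all.2 hu
  have hv' := (Set.finite_Iio n).eventually_all.2 hv
  have hquot := X_pow_dvd_taylorSeries_mul_sub hu'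
    (eventually_differentiableAt_iteratedDeriv_inv hv' hvne)
  calc iteratedDeriv n (fun x => u x / v x) x₀
      = n.factorial * coeff n (taylorSeries (fun x => u x * (v x)⁻¹) x₀) := by
        rw [taylorSeries, coeff_mk, mul_div_cancel₀ _ (Nat.cast_ne_zero.2 n.factorial_ne_zero)]
        simp only [div_eq_mul_inv]
    _ = n.factorial * coeff n (taylorSeries (fun x => (v x)⁻¹) x₀ * taylorSeries u x₀) := by
        rw [coeff_eq_of_X_pow_dvd_sub hquot n.lt_succ_self, mul_comm (taylorSeries u x₀)]
    _ = _ := by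
        rw [coeff_mul, Nat.sum_antidiagonal_eq_sum_range_succ
          (fun i j => coeff i (taylorSeries (fun x => (v x)⁻¹) x₀) * coeff j (taylorSeries u x₀))]
        refine congrArg _ (sum_congr rfl fun ℓ hℓ => ?_)
        simp only [taylorSeries, coeff_mk]
        rw [iteratedDeriv_inv_div_factorial hv' hvne (Nat.le_of_lt_succ (mem_range.1 hℓ)), mul_comm]
        rfl
end

section
/- For every natural number n and every positive integer m, the sum over all tuples (y₁, …, yₙ) of nonnegative integers satisfying Σᵢ₌₁ⁿ i·yᵢ = n of ( (Σᵢ yᵢ)! / (y₁! ⋯ yₙ!) ) · (−1)^{Σᵢ yᵢ} · Πᵢ₌₁ⁿ (binom(m, i))^{yᵢ}, computed in ℤ, equals (−1)ⁿ · binom(n + m − 1, m − 1). -/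
/-!
Put `P = (1 + X)^m - 1 = ∑_{i ≥ 1} binom(m, i) X^i`. By the multinomial theorem, the partitions
`y` with `∑ yᵢ = k` contribute exactly the coefficient of `X^n` in `P^k`, so the sum is the
coefficient of `X^n` in `∑_k (-P)^k = (1 + P)⁻¹ = (1 + X)^(-m)`, which is
`(-1)^n binom(n + m - 1, m - 1)`.
Parts larger than `n` do not affect coefficients up to `X^n`, so `P` may be truncated at degree `n`.
-/

open Finset PowerSeries

namespace PowerSeries

variable {R : Type*}

theorem coeff_sum_C_mul_X_pow_pow_s6 {ι : Type*} [CommSemiring R] [DecidableEq ι] (s : Finset ι)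
    (c : ι → R) (d : ι → ℕ) (k N : ℕ) :
    coeff N ((∑ i ∈ s, C (c i) * X ^ d i) ^ k) =
      ∑ y ∈ (piAntidiag s k).filter (fun y => ∑ i ∈ s, d i * y i = N),
        (Nat.multinomial s y : R) * ∏ i ∈ s, c i ^ y i := by
  rw [sum_pow_eq_sum_piAntidiag, map_sum, sum_filter]
  refine sum_congr rfl fun y _ => ?_
  have hmonomial : ∏ i ∈ s, (C (c i) * X ^ d i) ^ y i =
      C (∏ i ∈ s, c i ^ y i) * X ^ (∑ i ∈ s, d i * y i) := by
    simp_rw [mul_pow, prod_mul_distrib, ← map_pow, ← map_prod, ← pow_mul, prod_pow_eq_pow_sum]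
  rw [hmonomial, ← map_natCast C, ← mul_assoc, ← map_mul, coeff_C_mul_X_pow]
  simp only [eq_comm]

theorem coeff_one_add_X_pow [CommSemiring R] (m j : ℕ) :
    coeff j ((1 + X : R⟦X⟧) ^ m) = m.choose j := by
  rw [show (1 + X : R⟦X⟧) ^ m = ((1 + Polynomial.X) ^ m : Polynomial R) by simp,
    Polynomial.coeff_coe, Polynomial.coeff_one_add_X_pow]

theorem one_add_X_pow_mul_mk_neg_one_pow_mul_choose [CommRing R] {m : ℕ} (hm : 1 ≤ m) :
    (1 + X : R⟦X⟧) ^ m * mk (fun j => (-1) ^ j * ((m - 1 + j).choose (m - 1) : R)) = 1 := by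
  have hinv : mk (fun j => (-1) ^ j * ((m - 1 + j).choose (m - 1) : R)) =
      binomialSeries R (-m : ℤ) := by
    rw [← rescale_neg_one_invOneSubPow, invOneSubPow_val_eq_mk_sub_one_add_choose_of_pos _ _ hm,
      rescale_mk]
  rw [hinv, ← binomialSeries_nat (R := ℤ), ← binomialSeries_add, add_neg_cancel,
    binomialSeries_zero]

theorem coeff_eq_sum_neg_one_pow_mul_coeff_pow [CommRing R] {u B P : R⟦X⟧} {N : ℕ}
    (huB : u * B = 1) (hP : X ∣ P) (hu : X ^ (N + 1) ∣ u - (1 + P)) :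
    coeff N B = ∑ k ∈ range (N + 1), (-1) ^ k * coeff N (P ^ k) := by
  set S := ∑ k ∈ range (N + 1), (-P) ^ k
  have hgeom : (1 + P) * S = 1 - (-P) ^ (N + 1) := by
    linear_combination -(geom_sum_mul (-P) (N + 1))
  -- `B` inverts `u` and `S` inverts `1 + P` modulo `X ^ (N + 1)`, and `u ≡ 1 + P` there.
  have hdvd : X ^ (N + 1) ∣ B - S := by
    rw [show B - S = B * ((-P) ^ (N + 1) - (u - (1 + P)) * S) by
      linear_combination S * huB - B * hgeom]
    exact dvd_mul_of_dvd_right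
      (dvd_sub (pow_dvd_pow_of_dvd (dvd_neg.mpr hP) _) (dvd_mul_of_dvd_left hu _)) _
  have hcoeff := X_pow_dvd_iff.mp hdvd N (lt_add_one N)
  rw [map_sub, sub_eq_zero] at hcoeff
  rw [hcoeff, map_sum]
  refine sum_congr rfl fun k _ => ?_
  rw [neg_pow, ← map_one C, ← map_neg, ← map_pow, coeff_C_mul]

theorem X_pow_succ_dvd_one_add_X_pow_sub [CommRing R] (m n : ℕ) :
    X ^ (n + 1) ∣ (1 + X : R⟦X⟧) ^ m -
      (1 + ∑ i : Fin n, C (m.choose ((i : ℕ) + 1) : R) * X ^ ((i : ℕ) + 1)) := by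
  rw [X_pow_dvd_iff]
  intro j hj
  rw [map_sub, coeff_one_add_X_pow, map_add, map_sum, sub_eq_zero]
  simp_rw [coeff_C_mul_X_pow]
  rcases j with _ | j
  · simp
  · simp only [add_left_inj, coeff_one, Nat.add_one_ne_zero, if_false, zero_add,
      Fin.sum_univ_eq_sum_range (fun i => if j = i then (m.choose (i + 1) : R) else 0), sum_ite_eq,
      mem_range, if_pos (by omega : j < n)]

end PowerSeries

theorem Finset.sum_filter_piFinset_range_eq_sum_range_sum_piAntidiag {ι M : Type*} [Fintype ι]
    [DecidableEq ι] [AddCommMonoid M] (d : ι → ℕ) (hd : ∀ i, 0 < d i) (N : ℕ)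
    (f : (ι → ℕ) → M) :
    ∑ y ∈ (Fintype.piFinset fun _ : ι => range (N + 1)).filter (fun y => ∑ i, d i * y i = N),
      f y =
      ∑ k ∈ range (N + 1),
        ∑ y ∈ (piAntidiag univ k).filter (fun y => ∑ i, d i * y i = N), f y := by
  have hsum_le : ∀ y : ι → ℕ, ∑ i, y i ≤ ∑ i, d i * y i := fun y =>
    sum_le_sum fun i _ => Nat.le_mul_of_pos_left _ (hd i)
  rw [← sum_fiberwise_of_maps_to (g := fun y => ∑ i, y i) (t := range (N + 1))]
  · refine sum_congr rfl fun k _ => sum_congr ?_ fun _ _ => rfl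
    ext y
    simp only [mem_filter, Fintype.mem_piFinset, mem_range, mem_piAntidiag, mem_univ,
      implies_true, and_true]
    constructor
    · rintro ⟨⟨-, hy⟩, rfl⟩
      exact ⟨rfl, hy⟩
    · rintro ⟨rfl, hy⟩
      refine ⟨⟨fun i => Nat.lt_succ_of_le ?_, hy⟩, rfl⟩
      exact (single_le_sum (fun j _ => Nat.zero_le (y j)) (mem_univ i)).trans (hy ▸ hsum_le y)
  · intro y hy
    exact mem_range.mpr (Nat.lt_succ_of_le ((mem_filter.mp hy).2 ▸ hsum_le y))

theorem partition_multinomial_choose_sum (n m : ℕ) (hm : 1 ≤ m) :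
    ∑ y ∈ (Fintype.piFinset fun _ : Fin n => Finset.range (n + 1)).filter
        (fun y => ∑ i : Fin n, ((i : ℕ) + 1) * y i = n),
      (Nat.multinomial Finset.univ y : ℤ) * (-1) ^ (∑ i, y i) *
        ∏ i : Fin n, ((m.choose ((i : ℕ) + 1) : ℤ)) ^ y i =
      (-1) ^ n * ((n + m - 1).choose (m - 1) : ℤ) := by
  set P : ℤ⟦X⟧ := ∑ i : Fin n, C (m.choose ((i : ℕ) + 1) : ℤ) * X ^ ((i : ℕ) + 1)
  have hP : X ∣ P := dvd_sum fun i _ => (dvd_pow_self X (Nat.succ_ne_zero i)).mul_left _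
  calc _ = ∑ k ∈ range (n + 1), ∑ y ∈ (piAntidiag univ k).filter
          (fun y => ∑ i : Fin n, ((i : ℕ) + 1) * y i = n),
          (Nat.multinomial univ y : ℤ) * (-1) ^ (∑ i, y i) *
            ∏ i : Fin n, ((m.choose ((i : ℕ) + 1) : ℤ)) ^ y i :=
        sum_filter_piFinset_range_eq_sum_range_sum_piAntidiag _ (fun _ => Nat.succ_pos _) n _
    _ = ∑ k ∈ range (n + 1), (-1) ^ k * coeff n (P ^ k) := by
        refine sum_congr rfl fun k _ => ?_
        rw [coeff_sum_C_mul_X_pow_pow_s6, mul_sum]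
        refine sum_congr rfl fun y hy => ?_
        rw [(mem_piAntidiag.mp (mem_filter.mp hy).1).1]
        ring
    _ = coeff n (mk fun j => (-1) ^ j * ((m - 1 + j).choose (m - 1) : ℤ)) :=
        (coeff_eq_sum_neg_one_pow_mul_coeff_pow (one_add_X_pow_mul_mk_neg_one_pow_mul_choose hm) hP
          (X_pow_succ_dvd_one_add_X_pow_sub m n)).symm
    _ = _ := by rw [coeff_mk, show m - 1 + n = n + m - 1 by omega]
end
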